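/- arXiv:1112.0551 — 6 statements merged into one kernel-verified Lean document; each statement's English description precedes it below -/
import Mathlib

section
/- Let p > 0 and d > 1, and let (a_n) satisfy a_0 = -1 and the recurrence a_{n+1} = a_n · (n(n-1) + 2(d-1)n - p(d-1)) / (2(n+1)(n+d-1)) for n ≥ 0. Then the function g(s) = ∑_{n=0}^∞ a_n (1+s)^n, defined for s ∈ (-1, 1), satisfies the differential equation (1 - s²) g''(s) - 2(d-1) s g'(s) + p(d-1) g(s) = 0 for all s ∈ (-1, 1). -/
open Filter Topology Asymptotics

/-!
In the variable `x = 1 + s` the equation reads `x (2 - x) f'' - 2 (d - 1) (x - 1) f' + p (d - 1) f = 0`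
for `f x = ∑ aₙ xⁿ`, and the recurrence is exactly the vanishing of the coefficient of `xⁿ`.
The factor in the recurrence tends to `1/2`, so `|aₙ| = O(qⁿ)` for every `q > 1/2`; hence the series
and all its termwise derivatives converge absolutely for `|x| < 2`, which justifies differentiating
term by term.
-/

section TermwiseDerivatives

lemma abs_mul_descFactorial_mul_pow_le {ρ y : ℝ} (hρ : 0 < ρ) (hy : |y| ≤ ρ) (b : ℝ) (n k : ℕ) :
    |b * ((n.descFactorial k : ℝ) * y ^ (n - k))| ≤ (n : ℝ) ^ k * |b| * ρ ^ n / ρ ^ k := by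
  rw [abs_mul, mul_comm ((n : ℝ) ^ k), mul_assoc, mul_div_assoc, mul_div_assoc]
  gcongr
  rcases lt_or_ge n k with hnk | hkn
  · rw [Nat.descFactorial_eq_zero_iff_lt.mpr hnk]
    simp only [Nat.cast_zero, zero_mul, abs_zero]
    positivity
  · rw [abs_mul, abs_pow, Nat.abs_cast, div_eq_mul_inv, ← pow_sub₀ ρ hρ.ne' hkn]
    gcongr
    exact_mod_cast Nat.descFactorial_le_pow n k

lemma hasDerivAt_descFactorial_mul_pow (n k : ℕ) (y : ℝ) :
    HasDerivAt (fun z : ℝ => (n.descFactorial k : ℝ) * z ^ (n - k))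
      ((n.descFactorial (k + 1) : ℝ) * y ^ (n - (k + 1))) y := by
  refine ((hasDerivAt_pow (n - k) y).const_mul (n.descFactorial k : ℝ)).congr_deriv ?_
  rw [Nat.descFactorial_succ, Nat.cast_mul, ← Nat.sub_sub]
  ring

-- The hypothesis `hc` below encodes that `∑ c n xⁿ` has radius of convergence at least `r`.
variable {c : ℕ → ℝ} {r : ℝ}

lemma summable_mul_descFactorial_mul_pow
    (hc : ∀ k : ℕ, ∀ ρ, 0 < ρ → ρ < r → Summable fun n : ℕ => (n : ℝ) ^ k * |c n| * ρ ^ n)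
    (k : ℕ) {x : ℝ} (hx : |x| < r) :
    Summable fun n => c n * ((n.descFactorial k : ℝ) * x ^ (n - k)) := by
  obtain ⟨ρ, hxρ, hρr⟩ := exists_between hx
  have hρ : 0 < ρ := (abs_nonneg x).trans_lt hxρ
  exact .of_norm_bounded ((hc k ρ hρ hρr).div_const (ρ ^ k))
    fun n => abs_mul_descFactorial_mul_pow_le hρ hxρ.le (c n) n k

theorem hasDerivAt_tsum_mul_descFactorial_mul_pow
    (hc : ∀ k : ℕ, ∀ ρ, 0 < ρ → ρ < r → Summable fun n : ℕ => (n : ℝ) ^ k * |c n| * ρ ^ n)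
    (k : ℕ) {x : ℝ} (hx : |x| < r) :
    HasDerivAt (fun y => ∑' n, c n * ((n.descFactorial k : ℝ) * y ^ (n - k)))
      (∑' n, c n * ((n.descFactorial (k + 1) : ℝ) * x ^ (n - (k + 1)))) x := by
  obtain ⟨ρ, hxρ, hρr⟩ := exists_between hx
  have hρ : 0 < ρ := (abs_nonneg x).trans_lt hxρ
  exact hasDerivAt_tsum_of_isPreconnected ((hc (k + 1) ρ hρ hρr).div_const (ρ ^ (k + 1)))
    isOpen_Ioo isPreconnected_Ioo
    (fun n y _ => (hasDerivAt_descFactorial_mul_pow n k y).const_mul (c n))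
    (fun n y hy => abs_mul_descFactorial_mul_pow_le hρ (abs_lt.mpr hy).le (c n) n (k + 1))
    (abs_lt.mp hxρ) (summable_mul_descFactorial_mul_pow hc k hx) (abs_lt.mp hxρ)

theorem iteratedDeriv_tsum_mul_pow
    (hc : ∀ k : ℕ, ∀ ρ, 0 < ρ → ρ < r → Summable fun n : ℕ => (n : ℝ) ^ k * |c n| * ρ ^ n)
    (k : ℕ) {x : ℝ} (hx : |x| < r) :
    iteratedDeriv k (fun y => ∑' n, c n * y ^ n) x
      = ∑' n, c n * ((n.descFactorial k : ℝ) * x ^ (n - k)) := by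
  induction k generalizing x with
  | zero => simp
  | succ k ih =>
    have hnhds : {y : ℝ | |y| < r} ∈ 𝓝 x :=
      (isOpen_lt continuous_abs continuous_const).mem_nhds hx
    rw [iteratedDeriv_succ,
      EventuallyEq.deriv_eq (eventually_of_mem hnhds fun y hy => ih hy)]
    exact (hasDerivAt_tsum_mul_descFactorial_mul_pow hc k hx).deriv

end TermwiseDerivatives

lemma isBigO_pow_of_eventually_norm_succ_le {E : Type*} [SeminormedAddCommGroup E] {c : ℕ → E}
    {q : ℝ} (hq : 0 < q) (h : ∀ᶠ n in atTop, ‖c (n + 1)‖ ≤ q * ‖c n‖) :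
    c =O[atTop] (q ^ ·) := by
  obtain ⟨N, hN⟩ := eventually_atTop.mp h
  refine IsBigO.of_bound (‖c N‖ / q ^ N) (eventually_atTop.mpr ⟨N, fun n hn => ?_⟩)
  rw [Real.norm_of_nonneg (pow_nonneg hq.le n)]
  induction n, hn using Nat.le_induction with
  | base => rw [div_mul_cancel₀ _ (pow_pos hq N).ne']
  | succ n hn ih =>
    calc ‖c (n + 1)‖ ≤ q * ‖c n‖ := hN n hn
      _ ≤ q * (‖c N‖ / q ^ N * q ^ n) := by gcongr
      _ = ‖c N‖ / q ^ N * q ^ (n + 1) := by ring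

lemma summable_pow_mul_abs_mul_pow_of_eventually_abs_succ_le {c : ℕ → ℝ} {q ρ : ℝ} (hq : 0 < q)
    (h : ∀ᶠ n in atTop, |c (n + 1)| ≤ q * |c n|) (hρ : 0 < ρ) (hqρ : q * ρ < 1) (k : ℕ) :
    Summable fun n : ℕ => (n : ℝ) ^ k * |c n| * ρ ^ n := by
  have hqρ' : ‖q * ρ‖ < 1 := by rwa [Real.norm_of_nonneg (by positivity)]
  refine summable_of_isBigO_nat (summable_pow_mul_geometric_of_norm_lt_one k hqρ') ?_
  have hc : (fun n => |c n|) =O[atTop] (q ^ ·) :=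
    (isBigO_pow_of_eventually_norm_succ_le (c := c) hq h).norm_left
  simpa only [mul_pow, mul_assoc] using
    (isBigO_refl (fun n : ℕ => (n : ℝ) ^ k) atTop).mul (hc.mul (isBigO_refl (ρ ^ ·) atTop))

section Recurrence

variable {p d : ℝ} {a : ℕ → ℝ}

lemma recurrence_clear_denom (hd : 1 < d)
    (ha : ∀ n : ℕ, a (n + 1) =
      a n * (((n : ℝ) * ((n : ℝ) - 1) + 2 * (d - 1) * (n : ℝ) - p * (d - 1)) /
        (2 * ((n : ℝ) + 1) * ((n : ℝ) + d - 1)))) (n : ℕ) :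
    2 * ((n : ℝ) + 1) * ((n : ℝ) + d - 1) * a (n + 1) =
      ((n : ℝ) * ((n : ℝ) - 1) + 2 * (d - 1) * n - p * (d - 1)) * a n := by
  have hpos : 0 < 2 * ((n : ℝ) + 1) * ((n : ℝ) + d - 1) := by
    have : (0 : ℝ) ≤ n := n.cast_nonneg
    have : 0 < (n : ℝ) + d - 1 := by linarith
    positivity
  rw [ha n, mul_div_assoc', mul_div_cancel₀ _ hpos.ne']
  ring

lemma abs_numerator_le_denominator_mul (hd : 1 < d) {q n : ℝ} (hq : 1 / 2 < q) (hn : 1 ≤ n)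
    (hnB : |2 * d - 3| + |p| * (d - 1) ≤ (2 * q - 1) * n) :
    |n * (n - 1) + 2 * (d - 1) * n - p * (d - 1)| ≤ 2 * (n + 1) * (n + d - 1) * q := by
  have hd1 : 0 < d - 1 := by linarith
  have htri : |n ^ 2 + (2 * d - 3) * n + -(p * (d - 1))|
      ≤ n ^ 2 + (|2 * d - 3| + |p| * (d - 1)) * n := by
    refine (abs_add_three _ _ _).trans ?_
    rw [abs_neg, abs_mul, abs_mul, abs_of_pos hd1, abs_of_nonneg (sq_nonneg _),
      abs_of_nonneg (by linarith : 0 ≤ n)]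
    nlinarith [mul_nonneg (mul_nonneg (abs_nonneg p) hd1.le) (sub_nonneg.mpr hn)]
  rw [show n * (n - 1) + 2 * (d - 1) * n - p * (d - 1) = n ^ 2 + (2 * d - 3) * n + -(p * (d - 1))
    by ring]
  refine htri.trans ?_
  nlinarith [mul_le_mul_of_nonneg_right hnB (by linarith : 0 ≤ n),
    mul_nonneg (by linarith : 0 ≤ q) (by nlinarith : 0 ≤ d * n + d - 1)]

lemma eventually_abs_succ_le (hd : 1 < d)
    (hrec : ∀ n : ℕ, 2 * ((n : ℝ) + 1) * ((n : ℝ) + d - 1) * a (n + 1) =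
      ((n : ℝ) * ((n : ℝ) - 1) + 2 * (d - 1) * n - p * (d - 1)) * a n)
    {q : ℝ} (hq : 1 / 2 < q) : ∀ᶠ n in atTop, |a (n + 1)| ≤ q * |a n| := by
  obtain ⟨N, hN⟩ := exists_nat_ge ((|2 * d - 3| + |p| * (d - 1)) / (2 * q - 1))
  filter_upwards [eventually_ge_atTop (max N 1)] with n hn
  have hn1 : (1 : ℝ) ≤ n := by exact_mod_cast (le_max_right _ _).trans hn
  have hnB : |2 * d - 3| + |p| * (d - 1) ≤ (2 * q - 1) * n := by
    rw [div_le_iff₀ (by linarith)] at hN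
    have : (N : ℝ) ≤ n := by exact_mod_cast (le_max_left _ _).trans hn
    nlinarith
  have hD : 0 < 2 * ((n : ℝ) + 1) * ((n : ℝ) + d - 1) := by nlinarith
  refine le_of_mul_le_mul_left ?_ hD
  calc 2 * ((n : ℝ) + 1) * ((n : ℝ) + d - 1) * |a (n + 1)|
      = |(n : ℝ) * ((n : ℝ) - 1) + 2 * (d - 1) * n - p * (d - 1)| * |a n| := by
        rw [← abs_of_pos hD, ← abs_mul, ← abs_mul, hrec]
    _ ≤ 2 * ((n : ℝ) + 1) * ((n : ℝ) + d - 1) * q * |a n| := by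
        gcongr
        exact abs_numerator_le_denominator_mul hd hq hn1 hnB
    _ = 2 * ((n : ℝ) + 1) * ((n : ℝ) + d - 1) * (q * |a n|) := by ring

lemma summable_pow_mul_abs_mul_pow_of_lt_two (hd : 1 < d)
    (hrec : ∀ n : ℕ, 2 * ((n : ℝ) + 1) * ((n : ℝ) + d - 1) * a (n + 1) =
      ((n : ℝ) * ((n : ℝ) - 1) + 2 * (d - 1) * n - p * (d - 1)) * a n)
    (k : ℕ) {ρ : ℝ} (hρ : 0 < ρ) (hρ2 : ρ < 2) :
    Summable fun n : ℕ => (n : ℝ) ^ k * |a n| * ρ ^ n := by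
  have hq : 1 / 2 < (2 + ρ) / (4 * ρ) := by rw [lt_div_iff₀ (by positivity)]; linarith
  refine summable_pow_mul_abs_mul_pow_of_eventually_abs_succ_le (by positivity)
    (eventually_abs_succ_le hd hrec hq) hρ ?_ k
  rw [div_mul_eq_mul_div, div_lt_one (by positivity)]
  nlinarith

lemma tsum_ode_eq_zero_of_recurrence
    (hrec : ∀ n : ℕ, 2 * ((n : ℝ) + 1) * ((n : ℝ) + d - 1) * a (n + 1) =
      ((n : ℝ) * ((n : ℝ) - 1) + 2 * (d - 1) * n - p * (d - 1)) * a n)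
    {s : ℝ} (h0 : Summable fun n => a n * (1 + s) ^ n)
    (h1 : Summable fun n => a n * ((n.descFactorial 1 : ℝ) * (1 + s) ^ (n - 1)))
    (h2 : Summable fun n => a n * ((n.descFactorial 2 : ℝ) * (1 + s) ^ (n - 2))) :
    (1 - s ^ 2) * ∑' n, a n * ((n.descFactorial 2 : ℝ) * (1 + s) ^ (n - 2))
      - 2 * (d - 1) * s * ∑' n, a n * ((n.descFactorial 1 : ℝ) * (1 + s) ^ (n - 1))
      + p * (d - 1) * ∑' n, a n * (1 + s) ^ n = 0 := by
  set x := 1 + s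
  set F₀ := fun n => a n * x ^ n
  set F₁ := fun n => a n * ((n.descFactorial 1 : ℝ) * x ^ (n - 1))
  set F₂ := fun n => a n * ((n.descFactorial 2 : ℝ) * x ^ (n - 2))
  -- With `1 - s² = 2x - x²` and `s = x - 1` the sum splits as `∑ U - ∑ V`, and the
  -- recurrence says exactly `U (n + 1) = V n`.
  set U := fun n => 2 * x * F₂ n + 2 * (d - 1) * F₁ n
  set V := fun n => x ^ 2 * F₂ n + 2 * (d - 1) * x * F₁ n - p * (d - 1) * F₀ n
  have hU : Summable U := (h2.mul_left _).add (h1.mul_left _)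
  have hshift (n : ℕ) : U (n + 1) = V n := by
    rcases n with _ | _ | n
    · simpa [U, V, F₀, F₁, F₂] using hrec 0
    · have := hrec 1
      simp only [U, V, F₀, F₁, F₂, Nat.descFactorial, Nat.cast_mul, Nat.cast_one, tsub_zero,
        Nat.reduceSubDiff] at this ⊢
      linear_combination x * this
    · have := hrec (n + 2)
      simp only [U, V, F₀, F₁, F₂, Nat.descFactorial, Nat.cast_add, Nat.cast_mul, Nat.cast_ofNat,
        Nat.cast_one, tsub_zero, add_tsub_cancel_right, Nat.reduceSubDiff] at this ⊢
      linear_combination x ^ (n + 2) * this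
  have hUV : ∑' n, U n = ∑' n, V n := by
    have hU0 : U 0 = 0 := by simp [U, F₁, F₂]
    rw [hU.tsum_eq_zero_add, hU0, zero_add]
    exact tsum_congr hshift
  rw [(h2.mul_left _).tsum_add (h1.mul_left _), ((h2.mul_left _).add (h1.mul_left _)).tsum_sub
    (h0.mul_left _), (h2.mul_left _).tsum_add (h1.mul_left _)] at hUV
  simp only [tsum_mul_left] at hUV
  linear_combination hUV

end Recurrence

theorem stmt1_general (p d : ℝ) (hd : 1 < d) (a : ℕ → ℝ)
    (ha : ∀ n : ℕ, a (n + 1) =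
      a n * (((n : ℝ) * ((n : ℝ) - 1) + 2 * (d - 1) * (n : ℝ) - p * (d - 1)) /
        (2 * ((n : ℝ) + 1) * ((n : ℝ) + d - 1)))) :
    ∀ s ∈ Set.Ioo (-1 : ℝ) 1,
      (1 - s ^ 2) * iteratedDeriv 2 (fun t : ℝ => ∑' n : ℕ, a n * (1 + t) ^ n) s
        - 2 * (d - 1) * s * deriv (fun t : ℝ => ∑' n : ℕ, a n * (1 + t) ^ n) s
        + p * (d - 1) * (∑' n : ℕ, a n * (1 + s) ^ n) = 0 := by
  intro s ⟨hs₁, hs₂⟩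
  have hrec := recurrence_clear_denom hd ha
  have hc := fun k ρ => summable_pow_mul_abs_mul_pow_of_lt_two (ρ := ρ) hd hrec k
  have hx : |1 + s| < 2 := abs_lt.mpr ⟨by linarith, by linarith⟩
  have hderiv (k : ℕ) : iteratedDeriv k (fun t => ∑' n, a n * (1 + t) ^ n) s
      = ∑' n, a n * ((n.descFactorial k : ℝ) * (1 + s) ^ (n - k)) := by
    rw [iteratedDeriv_comp_const_add k (fun y => ∑' n, a n * y ^ n)]
    exact iteratedDeriv_tsum_mul_pow hc k hx
  rw [← iteratedDeriv_one, hderiv 1, hderiv 2]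
  exact tsum_ode_eq_zero_of_recurrence hrec
    (by simpa using summable_mul_descFactorial_mul_pow hc 0 hx)
    (summable_mul_descFactorial_mul_pow hc 1 hx) (summable_mul_descFactorial_mul_pow hc 2 hx)

/-- the power series `g(s) = ∑ a n (1+s)^n` with coefficients given by
the recurrence solves `(1-s²)g'' - 2(d-1)s g' + p(d-1)g = 0` on `(-1,1)`. -/
theorem stmt1 (p d : ℝ) (hp : 0 < p) (hd : 1 < d) (a : ℕ → ℝ)
    (ha0 : a 0 = -1)
    (ha : ∀ n : ℕ, a (n + 1) =
      a n * (((n : ℝ) * ((n : ℝ) - 1) + 2 * (d - 1) * (n : ℝ) - p * (d - 1)) /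
        (2 * ((n : ℝ) + 1) * ((n : ℝ) + d - 1)))) :
    ∀ s ∈ Set.Ioo (-1 : ℝ) 1,
      (1 - s ^ 2) * iteratedDeriv 2 (fun t : ℝ => ∑' n : ℕ, a n * (1 + t) ^ n) s
        - 2 * (d - 1) * s * deriv (fun t : ℝ => ∑' n : ℕ, a n * (1 + t) ^ n) s
        + p * (d - 1) * (∑' n : ℕ, a n * (1 + s) ^ n) = 0 :=
  stmt1_general p d hd a ha
end

section
/- Let p > 0, d > 1, and let g be twice continuously differentiable on an interval (a, b) ⊂ (-1, 1), satisfying (1-s²) g''(s) - 2(d-1) s g'(s) + p(d-1) g(s) = 0 for all s ∈ (a, b). Assume g(s) < 0 for all s ∈ (a, b), and that there exists c ∈ (a, b) with g'(s) > 0 for all s ∈ (a, c). Then g'(s) > 0 for all s ∈ (a, b). -/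
open Set Filter Topology

/-- maximum-principle statement: if `g` is a C² solution of the ODE on
`(a,b) ⊆ (-1,1)` which is negative on `(a,b)` and has `g' > 0` on some initial
interval `(a,c)`, then `g' > 0` on all of `(a,b)`. -/
theorem stmt5 (p d a b c : ℝ) (hp : 0 < p) (hd : 1 < d)
    (ha : -1 ≤ a) (hb : b ≤ 1) (hab : a < b)
    (g g' g'' : ℝ → ℝ)
    (hg' : ∀ s ∈ Set.Ioo a b, HasDerivAt g (g' s) s)
    (hg'' : ∀ s ∈ Set.Ioo a b, HasDerivAt g' (g'' s) s)
    (hcont : ContinuousOn g'' (Set.Ioo a b))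
    (hode : ∀ s ∈ Set.Ioo a b,
      (1 - s ^ 2) * g'' s - 2 * (d - 1) * s * g' s + p * (d - 1) * g s = 0)
    (hneg : ∀ s ∈ Set.Ioo a b, g s < 0)
    (hc : c ∈ Set.Ioo a b)
    (hpos : ∀ s ∈ Set.Ioo a c, 0 < g' s) :
    ∀ s ∈ Set.Ioo a b, 0 < g' s := by
  by_contra h
  push_neg at h
  obtain ⟨z₀, hz₀, hz₀'⟩ := h
  set Z : Set ℝ := {s | s ∈ Set.Ioo a b ∧ g' s ≤ 0} with hZdef
  have hZne : Z.Nonempty := ⟨z₀, hz₀, hz₀'⟩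
  have hZbdd : BddBelow Z := ⟨a, fun z hz => le_of_lt hz.1.1⟩
  set s₀ := sInf Z with hs₀def
  have hcs₀ : c ≤ s₀ := by
    refine le_csInf hZne fun z hz => ?_
    by_contra hlt
    push_neg at hlt
    exact absurd (hpos z ⟨hz.1.1, hlt⟩) (not_lt.2 hz.2)
  have hs₀b : s₀ < b := lt_of_le_of_lt (csInf_le hZbdd ⟨hz₀, hz₀'⟩) hz₀.2
  have has₀ : a < s₀ := lt_of_lt_of_le hc.1 hcs₀
  have hs₀mem : s₀ ∈ Set.Ioo a b := ⟨has₀, hs₀b⟩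
  -- g' > 0 strictly to the left of s₀
  have hleft : ∀ s ∈ Set.Ioo a s₀, 0 < g' s := by
    intro s hs
    by_contra hle
    push_neg at hle
    have : s ∈ Z := ⟨⟨hs.1, hs.2.trans hs₀b⟩, hle⟩
    exact absurd (csInf_le hZbdd this) (not_le.2 hs.2)
  have hIoo_mem : Set.Ioo a s₀ ∈ 𝓝[<] s₀ := Ioo_mem_nhdsLT_of_mem ⟨has₀, le_refl _⟩
  -- g' s₀ ≤ 0 via closure
  have hle0 : g' s₀ ≤ 0 := by
    have hcl : s₀ ∈ closure Z := csInf_mem_closure hZne hZbdd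
    have hnb : (𝓝[Z] s₀).NeBot := mem_closure_iff_nhdsWithin_neBot.1 hcl
    have hct : Tendsto g' (𝓝[Z] s₀) (𝓝 (g' s₀)) :=
      ((hg'' s₀ hs₀mem).continuousAt).continuousWithinAt
    exact le_of_tendsto hct (eventually_nhdsWithin_of_forall fun z hz => hz.2)
  -- g' s₀ ≥ 0 via left limit
  have hge0 : 0 ≤ g' s₀ := by
    have hct : Tendsto g' (𝓝[<] s₀) (𝓝 (g' s₀)) :=
      ((hg'' s₀ hs₀mem).continuousAt).continuousWithinAt
    refine ge_of_tendsto hct ?_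
    filter_upwards [hIoo_mem] with s hs
    exact (hleft s hs).le
  have heq0 : g' s₀ = 0 := le_antisymm hle0 hge0
  -- g'' s₀ ≤ 0 via left slopes
  have hslope : Tendsto (slope g' s₀) (𝓝[<] s₀) (𝓝 (g'' s₀)) :=
    (hasDerivAt_iff_tendsto_slope.1 (hg'' s₀ hs₀mem)).mono_left
      (nhdsWithin_mono _ fun x hx => ne_of_lt hx)
  have hg''le : g'' s₀ ≤ 0 := by
    refine le_of_tendsto hslope ?_
    filter_upwards [hIoo_mem] with s hs
    rw [slope_def_field, div_eq_inv_mul]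
    have h1 : g' s - g' s₀ ≥ 0 := by rw [heq0]; linarith [hleft s hs]
    have h2 : s - s₀ < 0 := by linarith [hs.2]
    have : (s - s₀)⁻¹ ≤ 0 := inv_nonpos.2 h2.le
    exact mul_nonpos_of_nonpos_of_nonneg this h1
  have hodes := hode s₀ hs₀mem
  rw [heq0, mul_zero] at hodes
  have hgneg := hneg s₀ hs₀mem
  have h1 : -1 < s₀ := lt_of_le_of_lt ha has₀
  have h2 : s₀ < 1 := lt_of_lt_of_le hs₀b hb
  nlinarith [mul_pos (mul_pos hp (by linarith : (0:ℝ) < d - 1)) (neg_pos.2 hgneg),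
    mul_nonneg (by nlinarith : (0:ℝ) ≤ 1 - s₀ ^ 2) (neg_nonneg.2 hg''le)]
end

section
/- Let p > 0 with p ≠ 1, let d > 1, let -1 < z₀ < 1, and define v(s) = ((1+s)/2)^p - ((1+z₀)/(1-z₀))^p ((1-s)/2)^p on (-1,1). Then for all s ∈ (-1,1): (1-s²) v''(s) - 2(d-1) s v'(s) + p(d-1) v(s) = ((p+d-2)(1-s²)/(p-1)) v''(s). -/
open Set Topology

/-!
Write `x = (1+s)/2`, `y = (1-s)/2`, so that `x + y = 1`, `s = x - y` and `1 - s² = 4xy`.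
Differentiating `v = x^p - c y^p` twice gives `v'' = p(p-1)/4 · (x^(p-2) - c y^(p-2))`, and in
the combination `(1-s²)v'' - 2(d-1)s v' + p(d-1)v` the `x`-terms add up to `p(p+d-2) x^(p-1) y`
and the `y`-terms to `-c p(p+d-2) x y^(p-1)`; both are `(p+d-2)(1-s²)/(p-1) · v''`.
-/

noncomputable section

def powerDiff (c q t : ℝ) : ℝ := ((1 + t) / 2) ^ q - c * ((1 - t) / 2) ^ q

variable {c q t : ℝ}

theorem hasDerivAt_powerDiff (ht : t ∈ Ioo (-1 : ℝ) 1) :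
    HasDerivAt (powerDiff c q) (q / 2 * powerDiff (-c) (q - 1) t) t := by
  have hx : (1 + t) / 2 ≠ 0 := by linarith [ht.1]
  have hy : (1 - t) / 2 ≠ 0 := by linarith [ht.2]
  have h₁ : HasDerivAt (fun t : ℝ => (1 + t) / 2) (1 / 2) t := by
    simpa using ((hasDerivAt_id t).const_add 1).div_const 2
  have h₂ : HasDerivAt (fun t : ℝ => (1 - t) / 2) (-1 / 2) t := by
    simpa using ((hasDerivAt_id t).const_sub 1).div_const 2
  refine ((h₁.rpow_const (Or.inl hx)).sub
    ((h₂.rpow_const (p := q) (Or.inl hy)).const_mul c)).congr_deriv ?_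
  simp only [powerDiff]
  ring

theorem deriv_powerDiff (ht : t ∈ Ioo (-1 : ℝ) 1) :
    deriv (powerDiff c q) t = q / 2 * powerDiff (-c) (q - 1) t :=
  hasDerivAt_powerDiff ht |>.deriv

theorem iteratedDeriv_two_powerDiff (ht : t ∈ Ioo (-1 : ℝ) 1) :
    iteratedDeriv 2 (powerDiff c q) t = q * (q - 1) / 4 * powerDiff c (q - 2) t := by
  have hderiv : deriv (powerDiff c q) =ᶠ[𝓝 t] fun u => q / 2 * powerDiff (-c) (q - 1) u := by
    filter_upwards [isOpen_Ioo.mem_nhds ht] with u hu using deriv_powerDiff hu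
  rw [iteratedDeriv_succ, iteratedDeriv_one, hderiv.deriv_eq,
    ((hasDerivAt_powerDiff ht).const_mul (q / 2)).deriv, neg_neg, sub_sub, one_add_one_eq_two]
  ring

theorem rpow_sub_one_eq_rpow_sub_two_mul {x : ℝ} (hx : x ≠ 0) (q : ℝ) :
    x ^ (q - 1) = x ^ (q - 2) * x := by
  rw [← Real.rpow_add_one hx]
  ring_nf

theorem rpow_eq_rpow_sub_two_mul_mul {x : ℝ} (hx : x ≠ 0) (q : ℝ) :
    x ^ q = x ^ (q - 2) * x * x := by
  rw [← rpow_sub_one_eq_rpow_sub_two_mul hx, ← Real.rpow_add_one hx]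
  ring_nf

theorem powerDiff_ode (c q d : ℝ) (hq : q ≠ 1) (hs : t ∈ Ioo (-1 : ℝ) 1) :
    (1 - t ^ 2) * iteratedDeriv 2 (powerDiff c q) t - 2 * (d - 1) * t * deriv (powerDiff c q) t
        + q * (d - 1) * powerDiff c q t
      = (q + d - 2) * (1 - t ^ 2) / (q - 1) * iteratedDeriv 2 (powerDiff c q) t := by
  have hx : 0 < (1 + t) / 2 := by linarith [hs.1]
  have hy : 0 < (1 - t) / 2 := by linarith [hs.2]
  have hq' : q - 1 ≠ 0 := sub_ne_zero.mpr hq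
  rw [iteratedDeriv_two_powerDiff hs, deriv_powerDiff hs]
  simp only [powerDiff]
  rw [rpow_sub_one_eq_rpow_sub_two_mul hx.ne' q, rpow_sub_one_eq_rpow_sub_two_mul hy.ne' q,
    rpow_eq_rpow_sub_two_mul_mul hx.ne' q, rpow_eq_rpow_sub_two_mul_mul hy.ne' q]
  field_simp
  ring

end

theorem stmt12_general (p d z₀ : ℝ) (hp1 : p ≠ 1) :
    ∀ s ∈ Set.Ioo (-1 : ℝ) 1,
      (1 - s ^ 2) *
          iteratedDeriv 2
            (fun t : ℝ => ((1 + t) / 2) ^ p - ((1 + z₀) / (1 - z₀)) ^ p * ((1 - t) / 2) ^ p) s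
        - 2 * (d - 1) * s *
            deriv
              (fun t : ℝ => ((1 + t) / 2) ^ p - ((1 + z₀) / (1 - z₀)) ^ p * ((1 - t) / 2) ^ p) s
        + p * (d - 1) *
            (((1 + s) / 2) ^ p - ((1 + z₀) / (1 - z₀)) ^ p * ((1 - s) / 2) ^ p)
      = (p + d - 2) * (1 - s ^ 2) / (p - 1) *
          iteratedDeriv 2
            (fun t : ℝ => ((1 + t) / 2) ^ p - ((1 + z₀) / (1 - z₀)) ^ p * ((1 - t) / 2) ^ p) s :=
  fun _ hs => powerDiff_ode _ p d hp1 hs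

/-- applying the ODE operator to
`v(s) = ((1+s)/2)^p - ((1+z₀)/(1-z₀))^p ((1-s)/2)^p`. -/
theorem stmt12 (p d z₀ : ℝ) (hp : 0 < p) (hp1 : p ≠ 1) (hd : 1 < d)
    (hz₀ : z₀ ∈ Set.Ioo (-1 : ℝ) 1) :
    ∀ s ∈ Set.Ioo (-1 : ℝ) 1,
      (1 - s ^ 2) *
          iteratedDeriv 2
            (fun t : ℝ => ((1 + t) / 2) ^ p - ((1 + z₀) / (1 - z₀)) ^ p * ((1 - t) / 2) ^ p) s
        - 2 * (d - 1) * s *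
            deriv
              (fun t : ℝ => ((1 + t) / 2) ^ p - ((1 + z₀) / (1 - z₀)) ^ p * ((1 - t) / 2) ^ p) s
        + p * (d - 1) *
            (((1 + s) / 2) ^ p - ((1 + z₀) / (1 - z₀)) ^ p * ((1 - s) / 2) ^ p)
      = (p + d - 2) * (1 - s ^ 2) / (p - 1) *
          iteratedDeriv 2
            (fun t : ℝ => ((1 + t) / 2) ^ p - ((1 + z₀) / (1 - z₀)) ^ p * ((1 - t) / 2) ^ p) s :=
  stmt12_general p d z₀ hp1
end

section
/- Let p > 0 and d > 1, let g be a twice continuously differentiable function on (-1,1) satisfying (1-s²) g''(s) - 2(d-1) s g'(s) + p(d-1) g(s) = 0 for all s ∈ (-1,1), and define W(x,y) = (x+y)^p g((y-x)/(x+y)) for x, y > 0. Then W satisfies the partial differential equation ((d-1)/(2x)) W_x(x,y) + ((d-1)/(2y)) W_y(x,y) + (1/2)[W_{xx}(x,y) - 2 W_{xy}(x,y) + W_{yy}(x,y)] = 0 for all x, y > 0. -/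
open Set Filter Topology

/-!
Write `s = (y - x) / (x + y)`. A function `(x + y) ^ q * f s` has partial derivatives of the same
shape: `∂x` gives `(x + y) ^ (q - 1) * (q f - (1 + s) f')` and `∂y` gives
`(x + y) ^ (q - 1) * (q f + (1 - s) f')`, because `∂x s = -(1 + s) / (x + y)` and
`∂y s = (1 - s) / (x + y)`. Applying this twice, the second-order part of the operator
collapses to `2 (x + y) ^ (p - 2) g''(s)`, and since `2x = (x + y)(1 - s)`, `2y = (x + y)(1 + s)`
the whole operator applied to `W` equals `2 (x + y) ^ (p - 2) / (1 - s²)` times the left-hand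
side of the ODE at `s`.
-/

noncomputable def homogExt (q : ℝ) (f : ℝ → ℝ) (x y : ℝ) : ℝ :=
  (x + y) ^ q * f ((y - x) / (x + y))

def leftProfile (q : ℝ) (f f' : ℝ → ℝ) (s : ℝ) : ℝ := q * f s - (1 + s) * f' s

def rightProfile (q : ℝ) (f f' : ℝ → ℝ) (s : ℝ) : ℝ := q * f s + (1 - s) * f' s

theorem sub_div_add_mem_Ioo {x y : ℝ} (hx : 0 < x) (hy : 0 < y) :
    (y - x) / (x + y) ∈ Ioo (-1 : ℝ) 1 := by
  have hxy : 0 < x + y := by linarith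
  constructor
  · rw [lt_div_iff₀ hxy]; linarith
  · rw [div_lt_iff₀ hxy]; linarith

theorem hasDerivAt_homogExt_left {q x y f' : ℝ} {f : ℝ → ℝ} (hxy : x + y ≠ 0)
    (hf : HasDerivAt f f' ((y - x) / (x + y))) :
    HasDerivAt (fun t => homogExt q f t y)
      ((x + y) ^ (q - 1) * (q * f ((y - x) / (x + y)) - (1 + (y - x) / (x + y)) * f')) x := by
  have hsum : HasDerivAt (fun t : ℝ => t + y) 1 x := (hasDerivAt_id x).add_const y
  have hσ : HasDerivAt (fun t : ℝ => (y - t) / (t + y)) (-(1 + (y - x) / (x + y)) / (x + y)) x := by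
    refine (((hasDerivAt_id' x).const_sub y).div hsum hxy).congr_deriv ?_
    field_simp
    ring
  have hpow : HasDerivAt (fun t : ℝ => (t + y) ^ q) (1 * q * (x + y) ^ (q - 1)) x :=
    hsum.rpow_const (Or.inl hxy)
  refine (hpow.mul (hf.comp x hσ)).congr_deriv ?_
  rw [Function.comp_apply, Real.rpow_sub_one hxy]
  field_simp
  ring

theorem hasDerivAt_homogExt_right {q x y f' : ℝ} {f : ℝ → ℝ} (hxy : x + y ≠ 0)
    (hf : HasDerivAt f f' ((y - x) / (x + y))) :
    HasDerivAt (fun u => homogExt q f x u)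
      ((x + y) ^ (q - 1) * (q * f ((y - x) / (x + y)) + (1 - (y - x) / (x + y)) * f')) y := by
  have hsum : HasDerivAt (fun u : ℝ => x + u) 1 y := (hasDerivAt_id y).const_add x
  have hσ : HasDerivAt (fun u : ℝ => (u - x) / (x + u)) ((1 - (y - x) / (x + y)) / (x + y)) y := by
    refine (((hasDerivAt_id' y).sub_const x).div hsum hxy).congr_deriv ?_
    field_simp
  have hpow : HasDerivAt (fun u : ℝ => (x + u) ^ q) (1 * q * (x + y) ^ (q - 1)) y :=
    hsum.rpow_const (Or.inl hxy)
  refine (hpow.mul (hf.comp y hσ)).congr_deriv ?_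
  rw [Function.comp_apply, Real.rpow_sub_one hxy]
  field_simp

theorem hasDerivAt_leftProfile {q s : ℝ} {f f' f'' : ℝ → ℝ} (hf : HasDerivAt f (f' s) s)
    (hf' : HasDerivAt f' (f'' s) s) :
    HasDerivAt (leftProfile q f f') (leftProfile (q - 1) f' f'' s) s := by
  unfold leftProfile
  refine ((hf.const_mul q).sub (((hasDerivAt_id' s).const_add 1).mul hf')).congr_deriv ?_
  ring

theorem hasDerivAt_rightProfile {q s : ℝ} {f f' f'' : ℝ → ℝ} (hf : HasDerivAt f (f' s) s)
    (hf' : HasDerivAt f' (f'' s) s) :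
    HasDerivAt (rightProfile q f f') (rightProfile (q - 1) f' f'' s) s := by
  unfold rightProfile
  refine ((hf.const_mul q).add (((hasDerivAt_id' s).const_sub 1).mul hf')).congr_deriv ?_
  ring

section Quadrant

variable {q x y : ℝ} {f f' : ℝ → ℝ} (hf : ∀ s ∈ Ioo (-1 : ℝ) 1, HasDerivAt f (f' s) s)
include hf

theorem deriv_homogExt_left (hx : 0 < x) (hy : 0 < y) :
    deriv (fun t => homogExt q f t y) x = homogExt (q - 1) (leftProfile q f f') x y :=
  (hasDerivAt_homogExt_left (by positivity) (hf _ (sub_div_add_mem_Ioo hx hy))).deriv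

theorem deriv_homogExt_right (hx : 0 < x) (hy : 0 < y) :
    deriv (fun u => homogExt q f x u) y = homogExt (q - 1) (rightProfile q f f') x y :=
  (hasDerivAt_homogExt_right (by positivity) (hf _ (sub_div_add_mem_Ioo hx hy))).deriv

theorem eventuallyEq_deriv_homogExt_left_nhds_fst (hx : 0 < x) (hy : 0 < y) :
    (fun t => deriv (fun u => homogExt q f u y) t) =ᶠ[𝓝 x]
      fun t => homogExt (q - 1) (leftProfile q f f') t y := by
  filter_upwards [eventually_gt_nhds hx] with t ht using deriv_homogExt_left hf ht hy

theorem eventuallyEq_deriv_homogExt_left_nhds_snd (hx : 0 < x) (hy : 0 < y) :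
    (fun u => deriv (fun t => homogExt q f t u) x) =ᶠ[𝓝 y]
      fun u => homogExt (q - 1) (leftProfile q f f') x u := by
  filter_upwards [eventually_gt_nhds hy] with u hu using deriv_homogExt_left hf hx hu

theorem eventuallyEq_deriv_homogExt_right_nhds_snd (hx : 0 < x) (hy : 0 < y) :
    (fun u => deriv (fun t => homogExt q f x t) u) =ᶠ[𝓝 y]
      fun u => homogExt (q - 1) (rightProfile q f f') x u := by
  filter_upwards [eventually_gt_nhds hy] with u hu using deriv_homogExt_right hf hx hu

end Quadrant

theorem leftProfile_sub_two_mul_rightProfile_add {q s : ℝ} {f f' f'' : ℝ → ℝ} :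
    leftProfile (q - 1) (leftProfile q f f') (leftProfile (q - 1) f' f'') s
      - 2 * rightProfile (q - 1) (leftProfile q f f') (leftProfile (q - 1) f' f'') s
      + rightProfile (q - 1) (rightProfile q f f') (rightProfile (q - 1) f' f'') s
      = 4 * f'' s := by
  simp only [leftProfile, rightProfile]
  ring

theorem homogExt_pde {p d x y : ℝ} {f f' f'' : ℝ → ℝ}
    (hf : ∀ s ∈ Ioo (-1 : ℝ) 1, HasDerivAt f (f' s) s)
    (hf' : ∀ s ∈ Ioo (-1 : ℝ) 1, HasDerivAt f' (f'' s) s)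
    (hode : ∀ s ∈ Ioo (-1 : ℝ) 1,
      (1 - s ^ 2) * f'' s - 2 * (d - 1) * s * f' s + p * (d - 1) * f s = 0)
    (hx : 0 < x) (hy : 0 < y) :
    (d - 1) / (2 * x) * deriv (fun t => homogExt p f t y) x
        + (d - 1) / (2 * y) * deriv (fun t => homogExt p f x t) y
        + 1 / 2 * (deriv (fun t => deriv (fun u => homogExt p f u y) t) x
            - 2 * deriv (fun u => deriv (fun t => homogExt p f t u) x) y
            + deriv (fun u => deriv (fun t => homogExt p f x t) u) y) = 0 := by
  have hL s (hs : s ∈ Ioo (-1 : ℝ) 1) := hasDerivAt_leftProfile (q := p) (hf s hs) (hf' s hs)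
  have hR s (hs : s ∈ Ioo (-1 : ℝ) 1) := hasDerivAt_rightProfile (q := p) (hf s hs) (hf' s hs)
  rw [deriv_homogExt_left hf hx hy, deriv_homogExt_right hf hx hy,
    (eventuallyEq_deriv_homogExt_left_nhds_fst hf hx hy).deriv_eq, deriv_homogExt_left hL hx hy,
    (eventuallyEq_deriv_homogExt_left_nhds_snd hf hx hy).deriv_eq, deriv_homogExt_right hL hx hy,
    (eventuallyEq_deriv_homogExt_right_nhds_snd hf hx hy).deriv_eq, deriv_homogExt_right hR hx hy]
  have hsum : 0 < x + y := by positivity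
  have h := hode _ (sub_div_add_mem_Ioo hx hy)
  have second := leftProfile_sub_two_mul_rightProfile_add (q := p) (f := f) (f' := f')
    (f'' := f'') (s := (y - x) / (x + y))
  simp only [homogExt]
  rw [Real.rpow_sub_one hsum.ne' (p - 1)]
  generalize (x + y) ^ (p - 1) = E
  -- `1 - s ^ 2 = 4 x y / (x + y) ^ 2` accounts for the coefficient of the ODE
  linear_combination (norm := skip) (E / (2 * (x + y))) * second + E * (x + y) / (2 * x * y) * h
  simp only [leftProfile, rightProfile]
  field_simp
  ring

theorem stmt13_general (p d : ℝ)
    (g : ℝ → ℝ) (hg : ContDiffOn ℝ 2 g (Set.Ioo (-1 : ℝ) 1))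
    (hode : ∀ s ∈ Set.Ioo (-1 : ℝ) 1,
      (1 - s ^ 2) * deriv (deriv g) s - 2 * (d - 1) * s * deriv g s
        + p * (d - 1) * g s = 0)
    (W : ℝ → ℝ → ℝ)
    (hW : ∀ x y : ℝ, W x y = (x + y) ^ p * g ((y - x) / (x + y))) :
    ∀ x y : ℝ, 0 < x → 0 < y →
      (d - 1) / (2 * x) * deriv (fun t => W t y) x
        + (d - 1) / (2 * y) * deriv (fun t => W x t) y
        + 1 / 2 * (deriv (fun t => deriv (fun u => W u y) t) x
            - 2 * deriv (fun u => deriv (fun t => W t u) x) y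
            + deriv (fun u => deriv (fun t => W x t) u) y) = 0 := by
  intro x y hx hy
  obtain rfl : W = homogExt p g := funext fun a => funext (hW a)
  have hg₁ : ∀ s ∈ Ioo (-1 : ℝ) 1, HasDerivAt g (deriv g s) s := fun s hs =>
    ((hg.differentiableOn (by norm_num)).differentiableAt (isOpen_Ioo.mem_nhds hs)).hasDerivAt
  have hg₂ : ∀ s ∈ Ioo (-1 : ℝ) 1, HasDerivAt (deriv g) (deriv (deriv g) s) s := fun s hs =>
    (((hg.deriv_of_isOpen (m := 1) isOpen_Ioo (by norm_num)).differentiableOn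
      (by norm_num)).differentiableAt (isOpen_Ioo.mem_nhds hs)).hasDerivAt
  exact homogExt_pde hg₁ hg₂ hode hx hy

/-- if `g` is a C² solution of the ODE on `(-1,1)` and
`W(x,y) = (x+y)^p g((y-x)/(x+y))`, then `W` solves the PDE \eqref{finvar}. -/
theorem stmt13 (p d : ℝ) (hp : 0 < p) (hd : 1 < d)
    (g : ℝ → ℝ) (hg : ContDiffOn ℝ 2 g (Set.Ioo (-1 : ℝ) 1))
    (hode : ∀ s ∈ Set.Ioo (-1 : ℝ) 1,
      (1 - s ^ 2) * deriv (deriv g) s - 2 * (d - 1) * s * deriv g s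
        + p * (d - 1) * g s = 0)
    (W : ℝ → ℝ → ℝ)
    (hW : ∀ x y : ℝ, W x y = (x + y) ^ p * g ((y - x) / (x + y))) :
    ∀ x y : ℝ, 0 < x → 0 < y →
      (d - 1) / (2 * x) * deriv (fun t => W t y) x
        + (d - 1) / (2 * y) * deriv (fun t => W x t) y
        + 1 / 2 * (deriv (fun t => deriv (fun u => W u y) t) x
            - 2 * deriv (fun u => deriv (fun t => W t u) x) y
            + deriv (fun u => deriv (fun t => W x t) u) y) = 0 :=
  stmt13_general p d g hg hode W hW
end

section
/- Let F : U → ℝ^m be smooth on an open set U ⊂ ℝ^{n+1}, with every component of F harmonic (ΔF = 0 componentwise), and suppose F(x) ≠ 0 at a point x ∈ U. Then for any real q, at x: Δ(|F|^q) = q |F|^{q-4} [ (q-2) ∑_{j=0}^{n} (∂_j F · F)² + |F|² |∇F|² ], where |∇F|² = ∑_{j=0}^n |∂_j F|². -/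
open Set Filter Topology
open scoped RealInnerProductSpace

/-- Laplacian identity for `|F|^q` when the components of `F` are
harmonic and `F(x) ≠ 0`:
`Δ(|F|^q) = q|F|^{q-4}[(q-2)∑_j (∂_j F · F)² + |F|²|∇F|²]`. -/
theorem stmt16 (n m : ℕ) (q : ℝ)
    (U : Set (EuclideanSpace ℝ (Fin (n + 1)))) (hU : IsOpen U)
    (F : EuclideanSpace ℝ (Fin (n + 1)) → EuclideanSpace ℝ (Fin m))
    (hF : ContDiffOn ℝ (⊤ : ℕ∞) F U)
    (hharm : ∀ y ∈ U,
      ∑ j : Fin (n + 1),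
        fderiv ℝ (fun z => fderiv ℝ F z (EuclideanSpace.single j (1 : ℝ))) y
          (EuclideanSpace.single j (1 : ℝ)) = 0)
    (x : EuclideanSpace ℝ (Fin (n + 1))) (hx : x ∈ U) (hFx : F x ≠ 0) :
    ∑ j : Fin (n + 1),
        fderiv ℝ (fun y => fderiv ℝ (fun z => ‖F z‖ ^ q) y (EuclideanSpace.single j (1 : ℝ))) x
          (EuclideanSpace.single j (1 : ℝ))
      = q * ‖F x‖ ^ (q - 4) *
          ((q - 2) *
              ∑ j : Fin (n + 1),
                ⟪fderiv ℝ F x (EuclideanSpace.single j (1 : ℝ)), F x⟫ ^ 2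
            + ‖F x‖ ^ 2 *
                ∑ j : Fin (n + 1),
                  ‖fderiv ℝ F x (EuclideanSpace.single j (1 : ℝ))‖ ^ 2) := by
  classical
  set e : Fin (n + 1) → EuclideanSpace ℝ (Fin (n + 1)) :=
    fun j => EuclideanSpace.single j (1 : ℝ) with he
  -- the inner-product-square function
  set g : EuclideanSpace ℝ (Fin (n + 1)) → ℝ := fun z => (⟪F z, F z⟫ : ℝ) with hg
  have hgnorm : ∀ z, g z = ‖F z‖ ^ 2 := fun z => real_inner_self_eq_norm_sq (F z)
  -- rewrite the norm power as an rpow of g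
  have hfun : (fun z => ‖F z‖ ^ q) = fun z => g z ^ (q / 2) := by
    funext z
    rw [hgnorm z, ← Real.rpow_natCast (‖F z‖) 2,
      ← Real.rpow_mul (norm_nonneg _)]
    ring_nf
  -- differentiability of F on U
  have hFdiff : ∀ y ∈ U, DifferentiableAt ℝ F y := fun y hy =>
    (hF.contDiffAt (hU.mem_nhds hy)).differentiableAt (by simp)
  have hgdiff : ∀ y ∈ U, DifferentiableAt ℝ g y := fun y hy =>
    (hFdiff y hy).inner ℝ (hFdiff y hy)
  -- the open neighborhood where F ≠ 0
  set V : Set (EuclideanSpace ℝ (Fin (n + 1))) := U ∩ F ⁻¹' {0}ᶜ with hVdef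
  have hVopen : IsOpen V :=
    hF.continuousOn.isOpen_inter_preimage hU isOpen_compl_singleton
  have hxV : x ∈ V := ⟨hx, hFx⟩
  have hVU : ∀ y ∈ V, y ∈ U := fun y hy => hy.1
  have hgpos : ∀ y ∈ V, 0 < g y := by
    intro y hy
    rw [hgnorm]
    exact pow_pos (norm_pos_iff.mpr hy.2) 2
  -- first derivative formula on V
  have hderiv1 : ∀ y ∈ V,
      fderiv ℝ (fun z => g z ^ (q / 2)) y =
        ((q / 2) * g y ^ (q / 2 - 1)) • fderiv ℝ g y := by
    intro y hy
    exact ((Real.hasDerivAt_rpow_const (p := q / 2) (Or.inl (hgpos y hy).ne')).comp_hasFDerivAt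
      y (hgdiff y (hVU y hy)).hasFDerivAt).fderiv
  have hgapp : ∀ y ∈ U, ∀ v, fderiv ℝ g y v = 2 * ⟪fderiv ℝ F y v, F y⟫ := by
    intro y hy v
    rw [hg]
    rw [fderiv_inner_apply (𝕜 := ℝ) (hFdiff y hy) (hFdiff y hy) v, real_inner_comm]
    ring
  -- eventual equality for the j-th partial derivative of ‖F‖^q
  have hev : ∀ j : Fin (n + 1),
      (fun y => fderiv ℝ (fun z => ‖F z‖ ^ q) y (e j)) =ᶠ[𝓝 x]
        fun y => q * (g y ^ (q / 2 - 1)) * ⟪fderiv ℝ F y (e j), F y⟫ := by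
    intro j
    filter_upwards [hVopen.mem_nhds hxV] with y hy
    rw [hfun, hderiv1 y hy]
    simp only [ContinuousLinearMap.coe_smul', Pi.smul_apply, smul_eq_mul]
    rw [hgapp y (hVU y hy)]
    ring
  -- differentiability of the fderiv of F
  have hF' : ContDiffOn ℝ (⊤ : ℕ∞) (fderiv ℝ F) U := hF.fderiv_of_isOpen hU (by simp)
  have hF'x : DifferentiableAt ℝ (fderiv ℝ F) x :=
    (hF'.contDiffAt (hU.mem_nhds hx)).differentiableAt (by simp)
  have hFjdiff : ∀ j : Fin (n + 1),
      DifferentiableAt ℝ (fun y => fderiv ℝ F y (e j)) x := by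
    intro j
    exact ((ContinuousLinearMap.apply ℝ (EuclideanSpace ℝ (Fin m)) (e j)).differentiableAt).comp
      x hF'x
  have hbdiff : ∀ j : Fin (n + 1),
      DifferentiableAt ℝ (fun y => (⟪fderiv ℝ F y (e j), F y⟫ : ℝ)) x := fun j =>
    (hFjdiff j).inner ℝ (hFdiff x hx)
  -- derivative of g ^ (q/2 - 1)
  have hudiff : DifferentiableAt ℝ (fun y => g y ^ (q / 2 - 1)) x :=
    ((Real.hasDerivAt_rpow_const (p := q / 2 - 1)
      (Or.inl (hgpos x hxV).ne')).comp_hasFDerivAt x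
      (hgdiff x hx).hasFDerivAt).differentiableAt
  -- derivative of u applied to a vector
  have hua : ∀ v, fderiv ℝ (fun y => g y ^ (q / 2 - 1)) x v =
      (q / 2 - 1) * g x ^ (q / 2 - 2) * (2 * ⟪fderiv ℝ F x v, F x⟫) := by
    intro v
    have h : fderiv ℝ (fun y => g y ^ (q / 2 - 1)) x =
        ((q / 2 - 1) * g x ^ (q / 2 - 1 - 1)) • fderiv ℝ g x :=
      ((Real.hasDerivAt_rpow_const (p := q / 2 - 1)
        (Or.inl (hgpos x hxV).ne')).comp_hasFDerivAt x
        (hgdiff x hx).hasFDerivAt).fderiv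
    rw [h]
    simp only [ContinuousLinearMap.coe_smul', Pi.smul_apply, smul_eq_mul]
    rw [hgapp x hx v]
    have h2 : q / 2 - 1 - 1 = q / 2 - 2 := by ring
    rw [h2]
  -- derivative of b j applied to e j
  have hba : ∀ j : Fin (n + 1),
      fderiv ℝ (fun y => (⟪fderiv ℝ F y (e j), F y⟫ : ℝ)) x (e j) =
        ‖fderiv ℝ F x (e j)‖ ^ 2 +
          ⟪fderiv ℝ (fun z => fderiv ℝ F z (e j)) x (e j), F x⟫ := by
    intro j
    rw [fderiv_inner_apply (𝕜 := ℝ) (hFjdiff j) (hFdiff x hx) (e j),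
      real_inner_self_eq_norm_sq]
  -- the per-coordinate second derivative
  have hmain : ∀ j : Fin (n + 1),
      fderiv ℝ (fun y => fderiv ℝ (fun z => ‖F z‖ ^ q) y (e j)) x (e j) =
        q * (g x ^ (q / 2 - 1) *
            (‖fderiv ℝ F x (e j)‖ ^ 2 +
              ⟪fderiv ℝ (fun z => fderiv ℝ F z (e j)) x (e j), F x⟫)
          + ⟪fderiv ℝ F x (e j), F x⟫ *
              ((q / 2 - 1) * g x ^ (q / 2 - 2) *
                (2 * ⟪fderiv ℝ F x (e j), F x⟫))) := by
    intro j
    rw [(hev j).fderiv_eq]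
    have hco : (fun y => q * (g y ^ (q / 2 - 1)) * (⟪fderiv ℝ F y (e j), F y⟫ : ℝ)) =
        fun y => q * ((g y ^ (q / 2 - 1)) * ⟪fderiv ℝ F y (e j), F y⟫) := by
      funext y; ring
    rw [hco, fderiv_const_mul (hudiff.fun_mul (hbdiff j)) q,
      fderiv_fun_mul hudiff (hbdiff j)]
    simp only [ContinuousLinearMap.coe_smul', Pi.smul_apply, smul_eq_mul,
      ContinuousLinearMap.add_apply]
    rw [hba j, hua (e j)]
  -- notation for the sums
  have hr : (0:ℝ) < ‖F x‖ := norm_pos_iff.mpr hFx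
  have hgx1 : g x ^ (q / 2 - 1) = ‖F x‖ ^ (q - 2) := by
    rw [hgnorm, ← Real.rpow_natCast (‖F x‖) 2, ← Real.rpow_mul hr.le]
    ring_nf
  have hgx2 : g x ^ (q / 2 - 2) = ‖F x‖ ^ (q - 4) := by
    rw [hgnorm, ← Real.rpow_natCast (‖F x‖) 2, ← Real.rpow_mul hr.le]
    ring_nf
  have hsplit : ‖F x‖ ^ (q - 2) = ‖F x‖ ^ (q - 4) * ‖F x‖ ^ 2 := by
    rw [← Real.rpow_natCast (‖F x‖) 2, ← Real.rpow_add hr]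
    norm_num
    congr 1
    ring
  calc ∑ j : Fin (n + 1),
        fderiv ℝ (fun y => fderiv ℝ (fun z => ‖F z‖ ^ q) y (e j)) x (e j)
      = ∑ j : Fin (n + 1),
          (q * ‖F x‖ ^ (q - 2) * ‖fderiv ℝ F x (e j)‖ ^ 2
            + q * ‖F x‖ ^ (q - 2) *
                ⟪fderiv ℝ (fun z => fderiv ℝ F z (e j)) x (e j), F x⟫
            + q * (q - 2) * ‖F x‖ ^ (q - 4) * ⟪fderiv ℝ F x (e j), F x⟫ ^ 2) := by
        refine Finset.sum_congr rfl fun j _ => ?_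
        rw [hmain j, hgx1, hgx2]
        ring
    _ = q * ‖F x‖ ^ (q - 2) * ∑ j : Fin (n + 1), ‖fderiv ℝ F x (e j)‖ ^ 2
          + q * ‖F x‖ ^ (q - 2) *
              ⟪∑ j : Fin (n + 1), fderiv ℝ (fun z => fderiv ℝ F z (e j)) x (e j), F x⟫
          + q * (q - 2) * ‖F x‖ ^ (q - 4) *
              ∑ j : Fin (n + 1), ⟪fderiv ℝ F x (e j), F x⟫ ^ 2 := by
        rw [Finset.sum_add_distrib, Finset.sum_add_distrib, ← Finset.mul_sum,
          ← Finset.mul_sum, ← Finset.mul_sum, sum_inner]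
    _ = q * ‖F x‖ ^ (q - 4) *
          ((q - 2) * ∑ j : Fin (n + 1), ⟪fderiv ℝ F x (e j), F x⟫ ^ 2
            + ‖F x‖ ^ 2 * ∑ j : Fin (n + 1), ‖fderiv ℝ F x (e j)‖ ^ 2) := by
        rw [hharm x hx, inner_zero_left, hsplit]
        ring
end

section
/- Let n ≥ 1, let F : U → ℝ^m be smooth on an open set U ⊂ ℝ^{n+1} with each component harmonic, let q > (n-1)/n, and suppose at a point x ∈ U that F(x) ≠ 0 and the Stein inequality ∑_{j=0}^{n} (∂_j F(x) · F(x))² ≤ (n/(n+1)) |F(x)|² |∇F(x)|² holds. Then at x: |F|^q Δ(|F|^q) ≥ (1 - (n-1)/(nq)) |∇|F|^q|². -/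
open Set Filter Topology
open scoped RealInnerProductSpace

/-- under Stein's inequality, `u = |F|^q` satisfies
`u Δu ≥ (1 - (n-1)/(nq)) |∇u|²` at `x`. -/
theorem stmt17 (n m : ℕ) (hn : 1 ≤ n) (q : ℝ)
    (U : Set (EuclideanSpace ℝ (Fin (n + 1)))) (hU : IsOpen U)
    (F : EuclideanSpace ℝ (Fin (n + 1)) → EuclideanSpace ℝ (Fin m))
    (hF : ContDiffOn ℝ (⊤ : ℕ∞) F U)
    (hharm : ∀ y ∈ U,
      ∑ j : Fin (n + 1),
        fderiv ℝ (fun z => fderiv ℝ F z (EuclideanSpace.single j (1 : ℝ))) y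
          (EuclideanSpace.single j (1 : ℝ)) = 0)
    (hq : ((n : ℝ) - 1) / n < q)
    (x : EuclideanSpace ℝ (Fin (n + 1))) (hx : x ∈ U) (hFx : F x ≠ 0)
    (hStein :
      ∑ j : Fin (n + 1),
          ⟪fderiv ℝ F x (EuclideanSpace.single j (1 : ℝ)), F x⟫ ^ 2
        ≤ (n : ℝ) / (n + 1) * ‖F x‖ ^ 2 *
            ∑ j : Fin (n + 1), ‖fderiv ℝ F x (EuclideanSpace.single j (1 : ℝ))‖ ^ 2) :
    (1 - ((n : ℝ) - 1) / ((n : ℝ) * q)) *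
        ∑ j : Fin (n + 1),
          (fderiv ℝ (fun y => ‖F y‖ ^ q) x (EuclideanSpace.single j (1 : ℝ))) ^ 2
      ≤ ‖F x‖ ^ q *
          ∑ j : Fin (n + 1),
            fderiv ℝ (fun y => fderiv ℝ (fun z => ‖F z‖ ^ q) y (EuclideanSpace.single j (1 : ℝ)))
              x (EuclideanSpace.single j (1 : ℝ)) := by
  have hn' : (0:ℝ) < n := by exact_mod_cast Nat.pos_of_ne_zero (by omega)
  have hq0 : 0 < q :=
    lt_of_le_of_lt (div_nonneg (sub_nonneg.2 (by exact_mod_cast hn)) hn'.le) hq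
  have hgpos : ∀ z, F z ≠ 0 → (0:ℝ) < ⟪F z, F z⟫ := fun z hz => by
    rw [real_inner_self_eq_norm_sq]; exact pow_pos (norm_pos_iff.mpr hz) 2
  -- differentiability of F on U
  have hDF : ∀ y ∈ U, HasFDerivAt F (fderiv ℝ F y) y := fun y hy =>
    ((hF.contDiffAt (hU.mem_nhds hy)).differentiableAt (by simp)).hasFDerivAt
  -- derivative of g = ⟪F, F⟫
  have hg : ∀ y ∈ U, HasFDerivAt (fun z => ⟪F z, F z⟫)
      ((fderivInnerCLM ℝ (F y, F y)).comp ((fderiv ℝ F y).prod (fderiv ℝ F y))) y :=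
    fun y hy => (hDF y hy).inner ℝ (hDF y hy)
  -- rewrite u = ‖F‖^q as inner product rpow
  have hfun : (fun z => ‖F z‖ ^ q) = fun z => ⟪F z, F z⟫ ^ (q/2) := by
    funext z
    rw [real_inner_self_eq_norm_sq, ← Real.rpow_natCast ‖F z‖ 2,
      ← Real.rpow_mul (norm_nonneg _)]
    norm_num
    congr 1
    push_cast
    ring
  -- first derivative formula on U ∩ {F ≠ 0}
  have hfd1 : ∀ y, y ∈ U → F y ≠ 0 → ∀ v,
      fderiv ℝ (fun z => ‖F z‖ ^ q) y v
        = q * ⟪F y, F y⟫ ^ (q/2 - 1) * ⟪fderiv ℝ F y v, F y⟫ := by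
    intro y hy hFy v
    have hgy : (0:ℝ) < ⟪F y, F y⟫ := hgpos y hFy
    have hu : HasFDerivAt (fun z => ⟪F z, F z⟫ ^ (q/2))
        ((q/2 * ⟪F y, F y⟫ ^ (q/2 - 1)) •
          ((fderivInnerCLM ℝ (F y, F y)).comp ((fderiv ℝ F y).prod (fderiv ℝ F y)))) y :=
      (hg y hy).rpow_const (Or.inl hgy.ne')
    rw [hfun, hu.fderiv]
    simp only [ContinuousLinearMap.coe_smul', Pi.smul_apply, ContinuousLinearMap.coe_comp',
      Function.comp_apply, ContinuousLinearMap.prod_apply, fderivInnerCLM_apply,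
      smul_eq_mul, real_inner_comm (F y)]
    ring
  -- neighborhood where formula holds
  have hVmem : ∀ᶠ y in 𝓝 x, y ∈ U ∧ F y ≠ 0 :=
    (hU.eventually_mem hx).and
      (((hF.contDiffAt (hU.mem_nhds hx)).continuousAt).eventually_ne hFx)
  have ht : (0:ℝ) < ⟪F x, F x⟫ := hgpos x hFx
  -- second derivative formula
  have hsecond : ∀ v : EuclideanSpace ℝ (Fin (n+1)),
      fderiv ℝ (fun y => fderiv ℝ (fun z => ‖F z‖ ^ q) y v) x v
        = q*(q-2) * ⟪F x, F x⟫ ^ (q/2-2) * ⟪fderiv ℝ F x v, F x⟫^2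
          + q * ⟪F x, F x⟫ ^ (q/2-1) *
            (‖fderiv ℝ F x v‖^2 + ⟪fderiv ℝ (fun z => fderiv ℝ F z v) x v, F x⟫) := by
    intro v
    have hΦd : DifferentiableAt ℝ (fun z => fderiv ℝ F z v) x := by
      have h1 : ContDiffAt ℝ (⊤ : ℕ∞) (fun z => fderiv ℝ F z) x :=
        (hF.fderiv_of_isOpen hU (by simp)).contDiffAt (hU.mem_nhds hx)
      exact (h1.clm_apply contDiffAt_const).differentiableAt (by simp)
    have hb : HasFDerivAt (fun y => ⟪fderiv ℝ F y v, F y⟫)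
        ((fderivInnerCLM ℝ (fderiv ℝ F x v, F x)).comp
          ((fderiv ℝ (fun z => fderiv ℝ F z v) x).prod (fderiv ℝ F x))) x :=
      hΦd.hasFDerivAt.inner ℝ (hDF x hx)
    have ha : HasFDerivAt (fun y => q * ⟪F y, F y⟫ ^ (q/2-1))
        (q • ((q/2-1) * ⟪F x, F x⟫ ^ (q/2-1-1)) •
          ((fderivInnerCLM ℝ (F x, F x)).comp ((fderiv ℝ F x).prod (fderiv ℝ F x)))) x :=
      ((hg x hx).rpow_const (Or.inl ht.ne')).const_mul q
    have hmul : HasFDerivAt (fun y => (q * ⟪F y, F y⟫ ^ (q/2-1)) * ⟪fderiv ℝ F y v, F y⟫) _ x :=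
      ha.mul hb
    have heq : (fun y => fderiv ℝ (fun z => ‖F z‖ ^ q) y v)
        =ᶠ[𝓝 x] (fun y => (q * ⟪F y, F y⟫ ^ (q/2-1)) * ⟪fderiv ℝ F y v, F y⟫) :=
      hVmem.mono (fun y hy => hfd1 y hy.1 hy.2 v)
    rw [heq.fderiv_eq, hmul.fderiv]
    have he : q/2-1-1 = q/2-2 := by ring
    simp only [he, ContinuousLinearMap.add_apply, ContinuousLinearMap.coe_smul',
      Pi.smul_apply, ContinuousLinearMap.coe_comp', Function.comp_apply,
      ContinuousLinearMap.prod_apply, fderivInnerCLM_apply, smul_eq_mul,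
      real_inner_comm (F x), real_inner_self_eq_norm_sq]
    ring
  -- sum of first derivatives squared
  have hL : ∑ j : Fin (n+1),
      (fderiv ℝ (fun y => ‖F y‖ ^ q) x (EuclideanSpace.single j (1:ℝ)))^2
      = q^2 * (⟪F x, F x⟫ ^ (q/2-1))^2 *
        ∑ j : Fin (n+1), ⟪fderiv ℝ F x (EuclideanSpace.single j (1:ℝ)), F x⟫^2 := by
    rw [Finset.mul_sum]
    refine Finset.sum_congr rfl (fun j _ => ?_)
    rw [hfd1 x hx hFx]; ring
  -- sum of second derivatives
  have hR : ∑ j : Fin (n+1),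
      fderiv ℝ (fun y => fderiv ℝ (fun z => ‖F z‖ ^ q) y (EuclideanSpace.single j (1:ℝ)))
        x (EuclideanSpace.single j (1:ℝ))
      = q*(q-2) * ⟪F x, F x⟫ ^ (q/2-2) *
          (∑ j : Fin (n+1), ⟪fderiv ℝ F x (EuclideanSpace.single j (1:ℝ)), F x⟫^2)
        + q * ⟪F x, F x⟫ ^ (q/2-1) *
          (∑ j : Fin (n+1), ‖fderiv ℝ F x (EuclideanSpace.single j (1:ℝ))‖^2) := by
    rw [Finset.sum_congr rfl (fun j _ => hsecond (EuclideanSpace.single j (1:ℝ)))]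
    rw [Finset.sum_add_distrib, ← Finset.mul_sum, ← Finset.mul_sum]
    congr 1
    rw [Finset.sum_add_distrib, ← sum_inner, hharm x hx, inner_zero_left, add_zero]
  -- final algebra
  rw [hL, hR, show ‖F x‖ ^ q = ⟪F x, F x⟫ ^ (q/2) from congrFun hfun x]
  set t : ℝ := ⟪F x, F x⟫ with htdef
  set S : ℝ := ∑ j : Fin (n+1), ⟪fderiv ℝ F x (EuclideanSpace.single j (1:ℝ)), F x⟫^2 with hSdef
  set G : ℝ := ∑ j : Fin (n+1), ‖fderiv ℝ F x (EuclideanSpace.single j (1:ℝ))‖^2 with hGdef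
  have hSnn : 0 ≤ S := Finset.sum_nonneg (fun j _ => sq_nonneg _)
  have hGnn : 0 ≤ G := Finset.sum_nonneg (fun j _ => sq_nonneg _)
  have hStein' : S ≤ (n:ℝ)/(n+1) * t * G := by
    rw [htdef, real_inner_self_eq_norm_sq]; exact hStein
  have key : (q - ((n:ℝ)-1)/n) * S ≤ (q-2)*S + t*G := by
    have h1 : ((n:ℝ)+1)/n * S ≤ t * G := by
      have h2 := mul_le_mul_of_nonneg_left hStein'
        (show (0:ℝ) ≤ ((n:ℝ)+1)/(n:ℝ) by positivity)
      have h3 : ((n:ℝ)+1)/n * ((n:ℝ)/(n+1) * t * G) = t * G := by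
        field_simp
        try ring
      rw [h3] at h2
      exact h2
    have h2 : q - ((n:ℝ)-1)/n = (q-2) + ((n:ℝ)+1)/n := by field_simp; ring
    rw [h2, add_mul]
    exact add_le_add_right h1 _
  have hA : t ^ (q/2-1) = t ^ (q/2-2) * t := by
    rw [show q/2-1 = (q/2-2)+1 by ring, Real.rpow_add ht, Real.rpow_one]
  have hC : t ^ (q/2) = t ^ (q/2-2) * t^2 := by
    rw [← Real.rpow_two, ← Real.rpow_add ht]
    norm_num
  rw [hA, hC]
  set B : ℝ := t ^ (q/2-2) with hBdef
  have hB : 0 < B := Real.rpow_pos_of_pos ht _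
  have hcq : (1 - ((n:ℝ)-1)/((n:ℝ)*q)) * q = q - ((n:ℝ)-1)/n := by
    field_simp
    try ring
  calc (1 - ((n:ℝ)-1)/((n:ℝ)*q)) * (q^2 * (B*t)^2 * S)
      = (q*B^2*t^2) * (((1 - ((n:ℝ)-1)/((n:ℝ)*q)) * q) * S) := by ring
    _ = (q*B^2*t^2) * ((q - ((n:ℝ)-1)/n) * S) := by rw [hcq]
    _ ≤ (q*B^2*t^2) * ((q-2)*S + t*G) := by
        apply mul_le_mul_of_nonneg_left key
        exact mul_nonneg (mul_nonneg hq0.le (by positivity)) (by positivity)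
    _ = B*t^2 * (q*(q-2)*B*S + q*(B*t)*G) := by ring
end
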